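/- arXiv:2509.16974 — 5 statements merged into one kernel-verified Lean document; each statement's English description precedes it below -/
import Mathlib

section
/- Let (κ_n)_{n≥1} be a non-increasing sequence of nonnegative reals with κ_1 > 0 and Σ := ∑_{n≥1} κ_n < ∞, and let (X_n)_{n≥1} be independent real random variables on a probability space with X_n distributed as N(0,κ_n). Set Y = ∑_{n≥1} X_n² (an almost surely convergent sum of nonnegative terms with E[Y] = Σ). Suppose t_1 > 0 and a ∈ ℝ satisfy 2κ_1 t_1 < 1 and −(1/2)·log(1 − 2κ_1 t_1) ≤ a·κ_1·t_1. Then for every t ∈ [0, t_1], the moment generating function satisfies E[exp(t·Y)] ≤ exp(a·t·Σ). -/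
/-!
For `X ~ N(0, v)` one has `E[exp (t X²)] = (1 - 2 v t)^(-1/2) = exp (φ (v t))` with
`φ s = -½ log (1 - 2 s)`. Since `φ` is convex with `φ 0 = 0`, the hypothesis `φ (κ₁ t₁) ≤ a κ₁ t₁`
propagates to `φ s ≤ a s` for all `0 ≤ s ≤ κ₁ t₁`, in particular to `s = κₙ t`. By independence the
exponential moment of a partial sum `∑_{n<N} Xₙ²` is the product of these factors, hence at most
`exp (a t ∑ₙ κₙ)`, and monotone convergence passes to the whole series.
-/

open MeasureTheory ProbabilityTheory Real Finset
open scoped NNReal ENNReal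

lemma ConvexOn.le_mul_of_le_mul_of_map_zero {s : Set ℝ} {f : ℝ → ℝ} (hf : ConvexOn ℝ s f)
    (h0 : 0 ∈ s) (hf0 : f 0 = 0) {x y a : ℝ} (hy : y ∈ s) (hx : 0 ≤ x) (hxy : x ≤ y)
    (hfy : f y ≤ a * y) : f x ≤ a * x := by
  rcases hx.eq_or_lt with rfl | hx
  · simp [hf0]
  have hxs : x ∈ s := hf.1.ordConnected.out h0 hy ⟨hx.le, hxy⟩
  have hslope := hf.secant_mono h0 hxs hy hx.ne' (hx.trans_le hxy).ne' hxy
  simp only [hf0, sub_zero] at hslope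
  calc f x = f x / x * x := by field_simp
    _ ≤ a * x := by
      gcongr
      exact hslope.trans ((div_le_iff₀ (hx.trans_le hxy)).2 hfy)

lemma convexOn_neg_half_log_one_sub_two_mul :
    ConvexOn ℝ (Set.Iio (1 / 2)) fun s => -(1 / 2) * log (1 - 2 * s) := by
  set A : ℝ →ᵃ[ℝ] ℝ := AffineMap.lineMap 1 (-1)
  have hA : ∀ s, A s = 1 - 2 * s := fun s => by simp [A, AffineMap.lineMap_apply]; ring
  have hdom : A ⁻¹' Set.Ioi 0 = Set.Iio (1 / 2) := by
    ext s
    simp only [Set.mem_preimage, Set.mem_Ioi, Set.mem_Iio, hA]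
    constructor <;> intro <;> linarith
  have h := (strictConcaveOn_log_Ioi.concaveOn.comp_affineMap A).neg.smul
    (by norm_num : (0 : ℝ) ≤ 1 / 2)
  rw [hdom] at h
  refine h.congr fun s _ => ?_
  simp only [Pi.neg_apply, Function.comp_apply, hA, smul_eq_mul]
  ring

lemma Continuous.map_tsum_le_iSup_map_sum_range {g : ℝ → ℝ≥0∞} (hgc : Continuous g)
    (f : ℕ → ℝ) :
    g (∑' n, f n) ≤ ⨆ N, g (∑ n ∈ range N, f n) := by
  -- A non-summable `f` has `∑' n, f n = 0`, the empty partial sum.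
  by_cases hsum : Summable f
  · exact le_of_tendsto' ((hgc.tendsto _).comp hsum.hasSum.tendsto_sum_nat) (le_iSup _)
  · simpa [tsum_eq_zero_of_not_summable hsum] using le_iSup (fun N => g (∑ n ∈ range N, f n)) 0

lemma lintegral_ofReal_exp_mul_tsum_le_of_sum_range_le {Ω : Type*} [MeasurableSpace Ω]
    {P : Measure Ω} {Z : ℕ → Ω → ℝ} (hZ : ∀ n, Measurable (Z n)) (hZ0 : ∀ n ω, 0 ≤ Z n ω)
    {t : ℝ} (ht : 0 ≤ t) {C : ℝ≥0∞}
    (h : ∀ N, ∫⁻ ω, ENNReal.ofReal (exp (t * ∑ n ∈ range N, Z n ω)) ∂P ≤ C) :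
    ∫⁻ ω, ENNReal.ofReal (exp (t * ∑' n, Z n ω)) ∂P ≤ C := by
  have hmono (ω : Ω) : Monotone fun N => ENNReal.ofReal (exp (t * ∑ n ∈ range N, Z n ω)) :=
    fun N M hNM => ENNReal.ofReal_le_ofReal <| exp_le_exp.2 <| mul_le_mul_of_nonneg_left
      (sum_mono_set_of_nonneg (hZ0 · ω) (range_mono hNM)) ht
  calc _ ≤ ∫⁻ ω, ⨆ N, ENNReal.ofReal (exp (t * ∑ n ∈ range N, Z n ω)) ∂P :=
        lintegral_mono fun ω =>
          (ENNReal.continuous_ofReal.comp (continuous_exp.comp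
            (continuous_const_mul t))).map_tsum_le_iSup_map_sum_range _
    _ = ⨆ N, ∫⁻ ω, ENNReal.ofReal (exp (t * ∑ n ∈ range N, Z n ω)) ∂P :=
        lintegral_iSup (fun N => by fun_prop) fun N M h ω => hmono ω h
    _ ≤ C := iSup_le h

namespace ProbabilityTheory

lemma iIndepFun.lintegral_ofReal_exp_sum {Ω ι : Type*} [MeasurableSpace Ω] {P : Measure Ω}
    {Y : ι → Ω → ℝ} (hY : iIndepFun Y P) (hmeas : ∀ i, Measurable (Y i)) (s : Finset ι) :
    ∫⁻ ω, ENNReal.ofReal (exp (∑ i ∈ s, Y i ω)) ∂P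
      = ∏ i ∈ s, ∫⁻ ω, ENNReal.ofReal (exp (Y i ω)) ∂P := by
  simp_rw [exp_sum, ENNReal.ofReal_prod_of_nonneg fun i _ => (exp_pos (Y i _)).le]
  exact lintegral_prod_eq_prod_lintegral_of_indepFun s _
    (hY.comp _ fun _ => ENNReal.measurable_ofReal.comp measurable_exp)
    fun i => ENNReal.measurable_ofReal.comp (measurable_exp.comp (hmeas i))

lemma lintegral_ofReal_exp_mul_sq_gaussianReal (v : ℝ≥0) {t : ℝ} (h : 2 * v * t < 1) :
    ∫⁻ x, ENNReal.ofReal (exp (t * x ^ 2)) ∂gaussianReal 0 v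
      = ENNReal.ofReal (√(1 - 2 * v * t))⁻¹ := by
  rcases eq_or_ne v 0 with rfl | hv
  · simp
  have hv' : (0 : ℝ) < v := by positivity
  set b : ℝ := (1 - 2 * v * t) / (2 * v) with hb_def
  have hb : 0 < b := div_pos (by linarith) (by positivity)
  have hdens : ∀ x, gaussianPDF 0 v x * ENNReal.ofReal (exp (t * x ^ 2))
      = ENNReal.ofReal ((√(2 * π * v))⁻¹ * exp (-b * x ^ 2)) := by
    intro x
    rw [gaussianPDF, ← ENNReal.ofReal_mul (gaussianPDFReal_nonneg 0 v x), gaussianPDFReal,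
      mul_assoc, ← exp_add]
    congr 3
    rw [hb_def]
    field_simp
    ring
  rw [gaussianReal_of_var_ne_zero 0 hv, lintegral_withDensity_eq_lintegral_mul _
    (measurable_gaussianPDF 0 v) (by fun_prop)]
  simp only [Pi.mul_apply, hdens]
  rw [← ofReal_integral_eq_lintegral_ofReal ((integrable_exp_neg_mul_sq hb).const_mul _)
    (Filter.Eventually.of_forall fun x => by positivity), integral_const_mul, integral_gaussian]
  congr 1
  have : π / b = (2 * π * v) / (1 - 2 * v * t) := by rw [hb_def]; field_simp
  rw [this, sqrt_div (by positivity)]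
  have : √(2 * π * v) ≠ 0 := by positivity
  field_simp

lemma lintegral_ofReal_exp_mul_sq_gaussianReal_le {v : ℝ≥0} {t s₁ a : ℝ} (ht : 0 ≤ t)
    (hs : v * t ≤ s₁) (hs₁ : 2 * s₁ < 1) (ha : -(1 / 2) * log (1 - 2 * s₁) ≤ a * s₁) :
    ∫⁻ x, ENNReal.ofReal (exp (t * x ^ 2)) ∂gaussianReal 0 v
      ≤ ENNReal.ofReal (exp (a * (v * t))) := by
  have hvt : 2 * v * t < 1 := by linarith
  have hsqrt : (√(1 - 2 * v * t))⁻¹ = exp (-(1 / 2) * log (1 - 2 * (v * t))) := by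
    rw [sqrt_eq_rpow, rpow_def_of_pos (by linarith), ← exp_neg]
    ring_nf
  rw [lintegral_ofReal_exp_mul_sq_gaussianReal v hvt, hsqrt]
  refine ENNReal.ofReal_le_ofReal (exp_le_exp.2 ?_)
  exact convexOn_neg_half_log_one_sub_two_mul.le_mul_of_le_mul_of_map_zero (by norm_num)
    (by simp) (by simp only [Set.mem_Iio]; linarith) (by positivity) hs ha

lemma iIndepFun.lintegral_ofReal_exp_mul_sum_sq_le {Ω ι : Type*} [MeasurableSpace Ω]
    {P : Measure Ω} {X : ι → Ω → ℝ} (hX : iIndepFun X P) (hXmeas : ∀ n, Measurable (X n))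
    {κ : ι → ℝ≥0} (hlaw : ∀ n, P.map (X n) = gaussianReal 0 (κ n)) {t s₁ a : ℝ} (ht : 0 ≤ t)
    (hκt : ∀ n, κ n * t ≤ s₁) (hs₁ : 2 * s₁ < 1) (ha : -(1 / 2) * log (1 - 2 * s₁) ≤ a * s₁)
    (s : Finset ι) :
    ∫⁻ ω, ENNReal.ofReal (exp (t * ∑ n ∈ s, X n ω ^ 2)) ∂P
      ≤ ENNReal.ofReal (exp (a * t * ∑ n ∈ s, (κ n : ℝ))) := by
  have hfactor (n : ι) : ∫⁻ ω, ENNReal.ofReal (exp (t * X n ω ^ 2)) ∂P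
      ≤ ENNReal.ofReal (exp (a * (κ n * t))) := by
    rw [← lintegral_map (f := fun x => ENNReal.ofReal (exp (t * x ^ 2))) (by fun_prop) (hXmeas n),
      hlaw n]
    exact lintegral_ofReal_exp_mul_sq_gaussianReal_le ht (hκt n) hs₁ ha
  simp_rw [mul_sum]
  rw [iIndepFun.lintegral_ofReal_exp_sum (Y := fun n ω => t * X n ω ^ 2)
    (hX.comp (fun _ x => t * x ^ 2) fun _ => by fun_prop) (fun n => by fun_prop)]
  calc _ ≤ ∏ n ∈ s, ENNReal.ofReal (exp (a * (κ n * t))) := prod_le_prod' fun n _ => hfactor n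
    _ = _ := by
      rw [← ENNReal.ofReal_prod_of_nonneg fun n _ => (exp_pos _).le, ← exp_sum]
      exact congrArg (ENNReal.ofReal ∘ exp) (sum_congr rfl fun n _ => by ring)

end ProbabilityTheory

/-- MGF bound for the squared L² norm `Y = ∑ₙ Xₙ²` of a Gaussian process with
Karhunen–Loève variances `κₙ` (here indexed by `n : ℕ`, with `κ 0` playing the role of `κ₁`):
if `2 κ₁ t₁ < 1` and `-(1/2) log(1 - 2 κ₁ t₁) ≤ a κ₁ t₁`, then for all `t ∈ [0, t₁]`,
`E[exp (t Y)] ≤ exp (a t Σ)` where `Σ = ∑ₙ κₙ`. -/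
theorem mgf_bound_sum_sq_gaussians
    {Ω : Type*} [MeasurableSpace Ω] (P : Measure Ω) [IsProbabilityMeasure P]
    (κ : ℕ → NNReal) (hmono : Antitone κ) (hκ1 : 0 < κ 0)
    (hsum : Summable fun n => (κ n : ℝ))
    (X : ℕ → Ω → ℝ) (hXmeas : ∀ n, Measurable (X n))
    (hindep : iIndepFun X P)
    (hlaw : ∀ n, P.map (X n) = gaussianReal 0 (κ n))
    (t₁ a : ℝ) (ht₁ : 0 < t₁) (ht₁' : 2 * (κ 0 : ℝ) * t₁ < 1)
    (ha : -(1 / 2 : ℝ) * Real.log (1 - 2 * (κ 0 : ℝ) * t₁) ≤ a * (κ 0 : ℝ) * t₁) :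
    ∀ t ∈ Set.Icc (0 : ℝ) t₁,
      ∫⁻ ω, ENNReal.ofReal (Real.exp (t * ∑' n, (X n ω) ^ 2)) ∂P
        ≤ ENNReal.ofReal (Real.exp (a * t * ∑' n, (κ n : ℝ))) := by
  rintro t ⟨ht0, ht1⟩
  set s₁ : ℝ := κ 0 * t₁
  have hs₁ : 0 < s₁ := mul_pos (NNReal.coe_pos.2 hκ1) ht₁
  have hs₁' : 2 * s₁ < 1 := by simpa only [s₁, mul_assoc] using ht₁'
  have ha' : -(1 / 2) * log (1 - 2 * s₁) ≤ a * s₁ := by simpa only [s₁, mul_assoc] using ha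
  have ha0 : 0 ≤ a := by
    have hlog : log (1 - 2 * s₁) < 0 := log_neg (by linarith) (by linarith)
    exact (pos_of_mul_pos_left ((by linarith : 0 < -(1 / 2) * log (1 - 2 * s₁)).trans_le ha')
      hs₁.le).le
  refine lintegral_ofReal_exp_mul_tsum_le_of_sum_range_le (fun n => (hXmeas n).pow_const 2)
    (fun n ω => sq_nonneg _) ht0 fun N => ?_
  calc _ ≤ ENNReal.ofReal (exp (a * t * ∑ n ∈ range N, (κ n : ℝ))) :=
        hindep.lintegral_ofReal_exp_mul_sum_sq_le hXmeas hlaw ht0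
          (fun n => mul_le_mul (hmono (Nat.zero_le n)) ht1 ht0 (κ 0).2) hs₁' ha' _
    _ ≤ _ := by gcongr; exact hsum.sum_le_tsum _ fun n _ => (κ n).2
end

section
/- Let (κ_n)_{n≥1} be a non-increasing sequence of nonnegative reals with κ_1 > 0 and Σ := ∑_{n≥1} κ_n < ∞, and let (X_n)_{n≥1} be independent real random variables on a probability space with X_n distributed as N(0,κ_n). Set Y = ∑_{n≥1} X_n². Then for every real M with M² > Σ, P(Y ≥ M²) ≤ exp( −M²/(2κ_1) + Σ/(2κ_1) + (Σ/(2κ_1))·log(M²/Σ) ). -/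
/-!
Chernoff bound. For `X ~ N(0, v)` one has `E exp (t X²) = (1 - 2 t v)^(-1/2)`. Taking
`t = s / (2 κ₀)` and using `κₙ ≤ κ₀`, Bernoulli's inequality `(1 - s)^a ≤ 1 - a s` (`0 ≤ a ≤ 1`)
bounds the `n`-th factor by `(1 - s)^(-κₙ / (2 κ₀))`, so by independence
`E exp (t ∑_{n<N} Xₙ²) ≤ (1 - s)^(-Σ / (2 κ₀))` uniformly in `N`. Fatou's lemma carries this to
the whole series, Markov's inequality gives `P(Y ≥ M²) ≤ e^(-t M²) (1 - s)^(-Σ / (2 κ₀))`, and the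
optimal choice `s = 1 - Σ / M²` is the stated bound.
-/

open MeasureTheory ProbabilityTheory Real Filter Finset
open scoped NNReal ENNReal Topology

lemma mul_log_one_sub_le_log_one_sub_mul {a s : ℝ} (ha0 : 0 ≤ a) (ha1 : a ≤ 1) (hs : s < 1) :
    a * log (1 - s) ≤ log (1 - a * s) := by
  have hbernoulli : (1 - s) ^ a ≤ 1 - a * s := by
    simpa [sub_eq_add_neg] using rpow_one_add_le_one_add_mul_self (s := -s) (by linarith) ha0 ha1
  rw [← log_rpow (by linarith)]
  exact log_le_log (by positivity) hbernoulli

namespace ProbabilityTheory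

-- For `1 ≤ 2 t v` both sides are junk `0`: the integral diverges and `√` vanishes on `(-∞, 0]`.
theorem mgf_sq_gaussianReal (v : ℝ≥0) (t : ℝ) :
    mgf (fun x ↦ x ^ 2) (gaussianReal 0 v) t = (√(1 - 2 * t * v))⁻¹ := by
  by_cases hv : v = 0
  · simp [mgf, hv]
  calc ∫ x, exp (t * x ^ 2) ∂gaussianReal 0 v
    _ = ∫ x, gaussianPDFReal 0 v x * exp (t * x ^ 2) := by
      simp_rw [integral_gaussianReal_eq_integral_smul hv, smul_eq_mul]
    _ = (√(2 * π * v))⁻¹ * ∫ x, exp (-((1 - 2 * t * v) / (2 * v)) * x ^ 2) := by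
      rw [← integral_const_mul]
      congr with x
      rw [gaussianPDFReal, mul_assoc, ← exp_add]
      congr 2
      field_simp
      ring
    _ = (√(1 - 2 * t * v))⁻¹ := by
      rw [integral_gaussian, show π / ((1 - 2 * t * v) / (2 * v)) = 2 * π * v / (1 - 2 * t * v) by
        field_simp, sqrt_div (by positivity)]
      field_simp

variable {Ω : Type*} {mΩ : MeasurableSpace Ω} {P : Measure Ω}

theorem mgf_sq_of_map_eq_gaussianReal {X : Ω → ℝ} {v : ℝ≥0} (hX : P.map X = gaussianReal 0 v)
    (t : ℝ) :
    mgf (fun ω ↦ X ω ^ 2) P t = (√(1 - 2 * t * v))⁻¹ := by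
  have hX_meas : AEMeasurable X P := aemeasurable_of_map_neZero (by rw [hX]; infer_instance)
  rw [← mgf_sq_gaussianReal, ← hX, mgf_map hX_meas (by fun_prop)]
  rfl

theorem integrable_exp_mul_sq_of_map_eq_gaussianReal {X : Ω → ℝ} {v : ℝ≥0}
    (hX : P.map X = gaussianReal 0 v) {t : ℝ} (ht : 2 * t * v < 1) :
    Integrable (fun ω ↦ exp (t * X ω ^ 2)) P := by
  have : NeZero P := ⟨by
    rintro rfl
    exact IsProbabilityMeasure.ne_zero (gaussianReal 0 v) (by simpa using hX.symm)⟩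
  rw [← mgf_pos_iff (X := fun ω ↦ X ω ^ 2), mgf_sq_of_map_eq_gaussianReal hX]
  have : 0 < 1 - 2 * t * v := by linarith
  positivity

theorem mgf_sq_le_of_map_eq_gaussianReal {X : Ω → ℝ} {v c : ℝ≥0}
    (hX : P.map X = gaussianReal 0 v) (hc : 0 < c) (hvc : v ≤ c) {s : ℝ} (hs : s < 1) :
    mgf (fun ω ↦ X ω ^ 2) P (s / (2 * c)) ≤ exp (v / (2 * c) * log (1 - s)⁻¹) := by
  have hc' : (0 : ℝ) < c := hc
  have ha0 : (0 : ℝ) ≤ v / c := by positivity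
  have ha1 : (v : ℝ) / c ≤ 1 := (div_le_one hc').2 hvc
  have hvs : 2 * (s / (2 * c)) * v = v / c * s := by field_simp
  have hpos : 0 < 1 - v / c * s := by rcases le_or_gt 0 s with h | h <;> nlinarith
  rw [mgf_sq_of_map_eq_gaussianReal hX, hvs, sqrt_eq_rpow,
    ← rpow_neg hpos.le, rpow_def_of_pos hpos, log_inv, exp_le_exp,
    show (v : ℝ) / (2 * c) = v / c / 2 by ring]
  linarith [mul_log_one_sub_le_log_one_sub_mul ha0 ha1 hs]

theorem ofReal_exp_mul_mul_measure_tsum_ge_le {Z : ℕ → Ω → ℝ} (hZ : ∀ n, Measurable (Z n))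
    {t : ℝ} (ht : 0 ≤ t) {B : ℝ≥0∞}
    (hB : ∀ N, ∫⁻ ω, ENNReal.ofReal (exp (t * ∑ n ∈ range N, Z n ω)) ∂P ≤ B) (a : ℝ) :
    ENNReal.ofReal (exp (t * a)) * P {ω | Summable (Z · ω) ∧ a ≤ ∑' n, Z n ω} ≤ B := by
  set F : ℕ → Ω → ℝ≥0∞ := fun N ω ↦ ENNReal.ofReal (exp (t * ∑ n ∈ range N, Z n ω))
  have hF : ∀ N, Measurable (F N) := fun N ↦ by fun_prop
  have hlim : {ω | Summable (Z · ω) ∧ a ≤ ∑' n, Z n ω}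
      ⊆ {ω | ENNReal.ofReal (exp (t * a)) ≤ liminf (F · ω) atTop} := by
    rintro ω ⟨hsum, ha⟩
    have hF_tendsto : Tendsto (F · ω) atTop (𝓝 (ENNReal.ofReal (exp (t * ∑' n, Z n ω)))) :=
      (ENNReal.continuous_ofReal.comp continuous_exp).continuousAt.tendsto.comp
        (hsum.hasSum.tendsto_sum_nat.const_mul t)
    rw [Set.mem_ofPred_eq, hF_tendsto.liminf_eq]
    gcongr
  calc ENNReal.ofReal (exp (t * a)) * P {ω | Summable (Z · ω) ∧ a ≤ ∑' n, Z n ω}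
    _ ≤ ∫⁻ ω, liminf (F · ω) atTop ∂P :=
      (mul_le_mul_right (measure_mono hlim) _).trans
        (mul_meas_ge_le_lintegral (Measurable.liminf hF) _)
    _ ≤ liminf (fun N ↦ ∫⁻ ω, F N ω ∂P) atTop := lintegral_liminf_le hF
    _ ≤ B := liminf_le_of_frequently_le' (.of_forall hB)

theorem iIndepFun.lintegral_exp_mul_sum {ι : Type*} {Z : ι → Ω → ℝ} (hindep : iIndepFun Z P)
    (hZ : ∀ i, Measurable (Z i)) {t : ℝ} {s : Finset ι}
    (hint : ∀ i ∈ s, Integrable (fun ω ↦ exp (t * Z i ω)) P) :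
    ∫⁻ ω, ENNReal.ofReal (exp (t * ∑ i ∈ s, Z i ω)) ∂P
      = ENNReal.ofReal (∏ i ∈ s, mgf (Z i) P t) := by
  have := hindep.isProbabilityMeasure
  rw [← hindep.mgf_sum hZ, mgf, ← ofReal_integral_eq_lintegral_ofReal]
  · simp only [Finset.sum_apply]
  · simpa only [Finset.sum_apply] using hindep.integrable_exp_mul_sum hZ hint
  · exact ae_of_all _ fun ω ↦ (exp_pos _).le

theorem iIndepFun.measure_tsum_ge_le {Z : ℕ → Ω → ℝ} (hindep : iIndepFun Z P)
    (hZ : ∀ n, Measurable (Z n)) {t : ℝ} (ht : 0 ≤ t)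
    (hint : ∀ n, Integrable (fun ω ↦ exp (t * Z n ω)) P) {B : ℝ}
    (hB : ∀ N, ∏ n ∈ range N, mgf (Z n) P t ≤ B) (a : ℝ) :
    P {ω | Summable (Z · ω) ∧ a ≤ ∑' n, Z n ω} ≤ ENNReal.ofReal (exp (-(t * a)) * B) := by
  have hmarkov := ofReal_exp_mul_mul_measure_tsum_ge_le hZ ht (B := ENNReal.ofReal B)
    (fun N ↦ by
      rw [hindep.lintegral_exp_mul_sum hZ fun n _ ↦ hint n]
      exact ENNReal.ofReal_le_ofReal (hB N)) a
  calc P {ω | Summable (Z · ω) ∧ a ≤ ∑' n, Z n ω}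
    _ = ENNReal.ofReal (exp (-(t * a))) *
        (ENNReal.ofReal (exp (t * a)) * P {ω | Summable (Z · ω) ∧ a ≤ ∑' n, Z n ω}) := by
      rw [← mul_assoc, ← ENNReal.ofReal_mul (exp_pos _).le, ← exp_add, neg_add_cancel, exp_zero,
        ENNReal.ofReal_one, one_mul]
    _ ≤ ENNReal.ofReal (exp (-(t * a)) * B) := by
      rw [ENNReal.ofReal_mul (exp_pos _).le]
      gcongr

end ProbabilityTheory

theorem tail_bound_sum_sq_gaussians_general
    {Ω : Type*} [MeasurableSpace Ω] (P : Measure Ω)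
    (κ : ℕ → NNReal) (hmono : Antitone κ) (hκ1 : 0 < κ 0)
    (hsum : Summable fun n => (κ n : ℝ))
    (X : ℕ → Ω → ℝ) (hXmeas : ∀ n, Measurable (X n))
    (hindep : iIndepFun X P)
    (hlaw : ∀ n, P.map (X n) = gaussianReal 0 (κ n))
    (M : ℝ) (hM : (∑' n, (κ n : ℝ)) < M ^ 2) :
    P {ω | M ^ 2 ≤ ∑' n, (X n ω) ^ 2}
      ≤ ENNReal.ofReal (Real.exp (-(M ^ 2) / (2 * (κ 0 : ℝ))
          + (∑' n, (κ n : ℝ)) / (2 * (κ 0 : ℝ))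
          + ((∑' n, (κ n : ℝ)) / (2 * (κ 0 : ℝ)))
              * Real.log (M ^ 2 / ∑' n, (κ n : ℝ)))) := by
  set S := ∑' n, (κ n : ℝ)
  have hS : 0 < S := (NNReal.coe_pos.2 hκ1).trans_le (hsum.le_tsum 0 fun n _ ↦ (κ n).coe_nonneg)
  have hM2 : 0 < M ^ 2 := hS.trans hM
  -- `s` minimises `-s M² - S log (1 - s)`, the exponent of the bound at `t = s / (2 κ₀)`
  set s := 1 - S / M ^ 2
  have hs0 : 0 < s := sub_pos.2 ((div_lt_one hM2).2 hM)
  have hs1 : s < 1 := sub_lt_self _ (div_pos hS hM2)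
  have hL : 0 ≤ log (1 - s)⁻¹ := by
    rw [sub_sub_cancel, inv_div]
    exact log_nonneg ((one_le_div hS).2 hM.le)
  have hvar : ∀ n, 2 * (s / (2 * κ 0)) * κ n < 1 := fun n ↦ by
    have : (κ n : ℝ) ≤ κ 0 := hmono (Nat.zero_le n)
    calc 2 * (s / (2 * κ 0)) * κ n ≤ 2 * (s / (2 * κ 0)) * κ 0 := by gcongr
      _ = s := by field_simp
      _ < 1 := hs1
  have hprod : ∀ N, ∏ n ∈ range N, mgf (fun ω ↦ X n ω ^ 2) P (s / (2 * κ 0))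
      ≤ exp (S / (2 * κ 0) * log (1 - s)⁻¹) := fun N ↦ calc
    _ ≤ ∏ n ∈ range N, exp (κ n / (2 * κ 0) * log (1 - s)⁻¹) :=
      prod_le_prod (fun _ _ ↦ mgf_nonneg) fun n _ ↦
        mgf_sq_le_of_map_eq_gaussianReal (hlaw n) hκ1 (hmono (Nat.zero_le n)) hs1
    _ = exp ((∑ n ∈ range N, (κ n : ℝ)) / (2 * κ 0) * log (1 - s)⁻¹) := by
      rw [← exp_sum, sum_div, sum_mul]
    _ ≤ exp (S / (2 * κ 0) * log (1 - s)⁻¹) := by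
      gcongr
      exact hsum.sum_le_tsum _ fun n _ ↦ (κ n).coe_nonneg
  have hchernoff := (hindep.comp (fun _ x ↦ x ^ 2) fun _ ↦ by fun_prop).measure_tsum_ge_le
    (fun n ↦ (hXmeas n).pow_const 2) (by positivity)
    (fun n ↦ integrable_exp_mul_sq_of_map_eq_gaussianReal (hlaw n) (hvar n)) hprod (M ^ 2)
  calc P {ω | M ^ 2 ≤ ∑' n, X n ω ^ 2}
    _ ≤ P {ω | Summable (fun n ↦ X n ω ^ 2) ∧ M ^ 2 ≤ ∑' n, X n ω ^ 2} := by
      refine measure_mono fun ω hω ↦ ⟨?_, hω⟩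
      by_contra hdiv
      rw [Set.mem_ofPred_eq, tsum_eq_zero_of_not_summable hdiv] at hω
      linarith
    _ ≤ _ := hchernoff
    _ = _ := by
      rw [← exp_add, sub_sub_cancel, inv_div]
      have hM0 : M ≠ 0 := by rintro rfl; simp at hM2
      congr 2
      simp only [s]
      field_simp
      ring

/-- Tail bound for the squared L² norm `Y = ∑ₙ Xₙ²` of a Gaussian process with
Karhunen–Loève variances `κₙ` (indexed by `n : ℕ`, `κ 0` playing the role of `κ₁`):
for `M² > Σ = ∑ₙ κₙ`,
`P(Y ≥ M²) ≤ exp(-M²/(2κ₁) + Σ/(2κ₁) + (Σ/(2κ₁)) log(M²/Σ))`. -/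
theorem tail_bound_sum_sq_gaussians
    {Ω : Type*} [MeasurableSpace Ω] (P : Measure Ω) [IsProbabilityMeasure P]
    (κ : ℕ → NNReal) (hmono : Antitone κ) (hκ1 : 0 < κ 0)
    (hsum : Summable fun n => (κ n : ℝ))
    (X : ℕ → Ω → ℝ) (hXmeas : ∀ n, Measurable (X n))
    (hindep : iIndepFun X P)
    (hlaw : ∀ n, P.map (X n) = gaussianReal 0 (κ n))
    (M : ℝ) (hM : (∑' n, (κ n : ℝ)) < M ^ 2) :
    P {ω | M ^ 2 ≤ ∑' n, (X n ω) ^ 2}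
      ≤ ENNReal.ofReal (Real.exp (-(M ^ 2) / (2 * (κ 0 : ℝ))
          + (∑' n, (κ n : ℝ)) / (2 * (κ 0 : ℝ))
          + ((∑' n, (κ n : ℝ)) / (2 * (κ 0 : ℝ)))
              * Real.log (M ^ 2 / ∑' n, (κ n : ℝ)))) :=
  tail_bound_sum_sq_gaussians_general P κ hmono hκ1 hsum X hXmeas hindep hlaw M hM
end

section
/- Let (κ_n)_{n≥1} be a non-increasing sequence of nonnegative reals with κ_1 > 0 and Σ := ∑_{n≥1} κ_n < ∞, and let (X_n)_{n≥1} be independent real random variables on a probability space with X_n distributed as N(0,κ_n). Set Y = ∑_{n≥1} X_n². Then for every real M with M² > Σ, P(Y ≥ M²) ≤ exp( −((e−1)/(2e·κ_1))·M² + Σ/(2κ_1) ). -/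
/-!
Chernoff's bound with `t = (e - 1) / (2 e κ₁)`. For `X ~ N(0, v)` one has
`E exp (t X²) = (1 - 2 t v)^(-1/2)`, and `2 t v = (1 - e⁻¹) s` with `s = v / κ₁ ∈ [0, 1]`;
convexity of `exp` on `[-1, 0]` gives `e^(-s) ≤ 1 - (1 - e⁻¹) s`, so every factor is at most
`exp (v / (2 κ₁))`. By independence, each partial sum of `∑ Xₙ²` then exceeds `a` with probability
at most `exp (-t a + Σ / (2 κ₁))`; continuity from below passes to the whole series for every
`a < M²`, and continuity of the bound in `a` reaches `a = M²`.
-/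

open scoped NNReal ENNReal
open MeasureTheory ProbabilityTheory Real Filter Set

lemma mgf_sq_gaussianReal {v : ℝ≥0} {t : ℝ} (h : 2 * t * v < 1) :
    mgf (fun x => x ^ 2) (gaussianReal 0 v) t = (√(1 - 2 * t * v))⁻¹ := by
  rcases eq_or_ne v 0 with rfl | hv
  · simp [mgf, gaussianReal_zero_var]
  have hv' : (0 : ℝ) < v := by positivity
  set b := (1 - 2 * t * v) / (2 * v) with hb_def
  calc mgf (fun x => x ^ 2) (gaussianReal 0 v) t
      = ∫ x, (√(2 * π * v))⁻¹ * exp (-b * x ^ 2) := by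
        rw [mgf, integral_gaussianReal_eq_integral_smul hv]
        congr 1 with x
        rw [gaussianPDFReal, smul_eq_mul, mul_assoc, ← exp_add]
        congr 2
        rw [hb_def]
        field_simp
        ring
    _ = (√(1 - 2 * t * v))⁻¹ := by
        rw [integral_const_mul, integral_gaussian, ← sqrt_inv, ← sqrt_inv,
          ← sqrt_mul (by positivity)]
        congr 1
        rw [hb_def]
        field_simp

lemma integrable_exp_mul_sq_gaussianReal {v : ℝ≥0} {t : ℝ} (h : 2 * t * v < 1) :
    Integrable (fun x => exp (t * x ^ 2)) (gaussianReal 0 v) := by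
  rw [← mgf_pos_iff, mgf_sq_gaussianReal h]
  have : 0 < 1 - 2 * t * v := by linarith
  positivity

lemma exp_neg_le_one_sub_mul {s : ℝ} (hs0 : 0 ≤ s) (hs1 : s ≤ 1) :
    exp (-s) ≤ 1 - (1 - exp (-1)) * s := by
  have := convexOn_exp.2 (mem_univ 0) (mem_univ (-1)) (sub_nonneg.2 hs1) hs0 (by ring)
  simp only [smul_eq_mul, mul_zero, zero_add, exp_zero, mul_one, mul_neg] at this
  linarith

lemma inv_sqrt_one_sub_mul_le_exp {s : ℝ} (hs0 : 0 ≤ s) (hs1 : s ≤ 1) :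
    (√(1 - (1 - exp (-1)) * s))⁻¹ ≤ exp (s / 2) := by
  have h := exp_neg_le_one_sub_mul hs0 hs1
  have hsq : √(exp (-s)) = exp (-(s / 2)) := by
    rw [← sq_eq_sq₀ (sqrt_nonneg _) (exp_nonneg _), sq_sqrt (exp_nonneg _), ← exp_nat_mul]
    ring_nf
  rw [← inv_inv (exp (s / 2)), ← exp_neg, ← hsq]
  exact inv_anti₀ (sqrt_pos.2 (exp_pos _)) (sqrt_le_sqrt h)

lemma two_mul_div_mul_eq {κ v : ℝ} (hκ : κ ≠ 0) :
    2 * ((exp 1 - 1) / (2 * exp 1 * κ)) * v = (1 - exp (-1)) * (v / κ) := by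
  rw [exp_neg]
  field_simp

lemma two_mul_div_mul_lt_one {κ v : ℝ} (hκ : 0 < κ) (hv : v ≤ κ) :
    2 * ((exp 1 - 1) / (2 * exp 1 * κ)) * v < 1 := by
  have he : 0 < exp (-1) := exp_pos _
  calc 2 * ((exp 1 - 1) / (2 * exp 1 * κ)) * v = (1 - exp (-1)) * (v / κ) :=
        two_mul_div_mul_eq hκ.ne'
    _ ≤ 1 - exp (-1) :=
        mul_le_of_le_one_right (by linarith [exp_lt_one_iff.2 (neg_one_lt_zero (R := ℝ))])
          ((div_le_one hκ).2 hv)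
    _ < 1 := by linarith

lemma mgf_sq_gaussianReal_le {κ : ℝ} {v : ℝ≥0} (hκ : 0 < κ) (hv : v ≤ κ) :
    mgf (fun x => x ^ 2) (gaussianReal 0 v) ((exp 1 - 1) / (2 * exp 1 * κ))
      ≤ exp (v / (2 * κ)) := by
  rw [mgf_sq_gaussianReal (two_mul_div_mul_lt_one hκ hv), two_mul_div_mul_eq hκ.ne',
    show (v : ℝ) / (2 * κ) = v / κ / 2 by ring]
  exact inv_sqrt_one_sub_mul_le_exp (div_nonneg v.2 hκ.le) ((div_le_one hκ).2 hv)

theorem ProbabilityTheory.iIndepFun.measure_sum_ge_le_of_mgf_le {Ω ι : Type*}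
    {mΩ : MeasurableSpace Ω} {μ : Measure Ω} {Y : ι → Ω → ℝ} (h_indep : iIndepFun Y μ)
    (h_meas : ∀ i, Measurable (Y i)) {t : ℝ} (ht : 0 ≤ t) {s : Finset ι} {c : ι → ℝ}
    (h_int : ∀ i ∈ s, Integrable (fun ω => exp (t * Y i ω)) μ)
    (h_mgf : ∀ i ∈ s, mgf (Y i) μ t ≤ exp (c i)) (a : ℝ) :
    μ {ω | a ≤ ∑ i ∈ s, Y i ω} ≤ ENNReal.ofReal (exp (-t * a + ∑ i ∈ s, c i)) := by
  have := h_indep.isProbabilityMeasure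
  rw [ENNReal.le_ofReal_iff_toReal_le (measure_ne_top _ _) (exp_nonneg _)]
  calc μ.real {ω | a ≤ ∑ i ∈ s, Y i ω}
      ≤ exp (-t * a) * mgf (∑ i ∈ s, Y i) μ t := by
        simpa only [Finset.sum_apply] using
          measure_ge_le_exp_mul_mgf a ht (h_indep.integrable_exp_mul_sum h_meas h_int)
    _ = exp (-t * a) * ∏ i ∈ s, mgf (Y i) μ t := by rw [h_indep.mgf_sum h_meas]
    _ ≤ exp (-t * a) * ∏ i ∈ s, exp (c i) :=
        mul_le_mul_of_nonneg_left (Finset.prod_le_prod (fun _ _ => mgf_nonneg) h_mgf)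
          (exp_nonneg _)
    _ = exp (-t * a + ∑ i ∈ s, c i) := by rw [← exp_sum, ← exp_add]

lemma exists_lt_sum_range_of_lt_tsum {f : ℕ → ℝ} {b : ℝ} (hb : b < ∑' n, f n) :
    ∃ N, b < ∑ n ∈ Finset.range N, f n := by
  by_cases hf : Summable f
  · exact (hf.hasSum.tendsto_sum_nat.eventually (eventually_gt_nhds hb)).exists
  · rw [tsum_eq_zero_of_not_summable hf] at hb
    exact ⟨0, by simpa using hb⟩

lemma measure_le_tsum_le_iSup_measure {Ω : Type*} {mΩ : MeasurableSpace Ω} {μ : Measure Ω}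
    {Y : ℕ → Ω → ℝ} (hY : ∀ n ω, 0 ≤ Y n ω) {a b : ℝ} (hba : b < a) :
    μ {ω | a ≤ ∑' n, Y n ω} ≤ ⨆ N, μ {ω | b ≤ ∑ n ∈ Finset.range N, Y n ω} := by
  have h_mono : Monotone fun N => {ω | b ≤ ∑ n ∈ Finset.range N, Y n ω} := fun N N' hN ω hω =>
    hω.trans (Finset.sum_le_sum_of_subset_of_nonneg (Finset.range_subset_range.2 hN)
      fun n _ _ => hY n ω)
  calc μ {ω | a ≤ ∑' n, Y n ω}
      ≤ μ (⋃ N, {ω | b ≤ ∑ n ∈ Finset.range N, Y n ω}) := measure_mono fun ω hω =>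
        mem_iUnion.2 ((exists_lt_sum_range_of_lt_tsum (hba.trans_le hω)).imp fun _ => le_of_lt)
    _ = ⨆ N, μ {ω | b ≤ ∑ n ∈ Finset.range N, Y n ω} := h_mono.measure_iUnion

theorem tail_bound_sum_sq_gaussians'_general
    {Ω : Type*} [MeasurableSpace Ω] (P : Measure Ω) [IsProbabilityMeasure P]
    (κ : ℕ → NNReal) (hmono : Antitone κ) (hκ1 : 0 < κ 0)
    (hsum : Summable fun n => (κ n : ℝ))
    (X : ℕ → Ω → ℝ) (hXmeas : ∀ n, Measurable (X n))
    (hindep : iIndepFun X P)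
    (hlaw : ∀ n, P.map (X n) = gaussianReal 0 (κ n))
    (M : ℝ) :
    P {ω | M ^ 2 ≤ ∑' n, (X n ω) ^ 2}
      ≤ ENNReal.ofReal (Real.exp
          (-((Real.exp 1 - 1) / (2 * Real.exp 1 * (κ 0 : ℝ))) * M ^ 2
            + (∑' n, (κ n : ℝ)) / (2 * (κ 0 : ℝ)))) := by
  have hκ0 : (0 : ℝ) < κ 0 := hκ1
  have hκn (n : ℕ) : (κ n : ℝ) ≤ κ 0 := hmono (Nat.zero_le n)
  set t := (exp 1 - 1) / (2 * exp 1 * (κ 0 : ℝ))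
  set C := (∑' n, (κ n : ℝ)) / (2 * (κ 0 : ℝ))
  have ht : 0 ≤ t := div_nonneg (by linarith [add_one_le_exp 1]) (by positivity)
  have hmgf_eq (n : ℕ) : mgf (fun ω => X n ω ^ 2) P t
      = mgf (fun x => x ^ 2) (gaussianReal 0 (κ n)) t := by
    rw [← hlaw n, mgf_map (hXmeas n).aemeasurable (by fun_prop)]
    rfl
  have hint (n : ℕ) : Integrable (fun ω => exp (t * X n ω ^ 2)) P := by
    rw [← mgf_pos_iff, hmgf_eq n, mgf_pos_iff]
    exact integrable_exp_mul_sq_gaussianReal (two_mul_div_mul_lt_one hκ0 (hκn n))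
  have hpartial (a : ℝ) (N : ℕ) :
      P {ω | a ≤ ∑ n ∈ Finset.range N, X n ω ^ 2} ≤ ENNReal.ofReal (exp (-t * a + C)) := by
    have hindep_sq : iIndepFun (fun n ω => X n ω ^ 2) P :=
      hindep.comp (fun _ (x : ℝ) => x ^ 2) fun _ => by fun_prop
    refine (hindep_sq.measure_sum_ge_le_of_mgf_le (fun n => (hXmeas n).pow_const 2) ht
      (fun n _ => hint n)
      (fun n _ => (hmgf_eq n).trans_le (mgf_sq_gaussianReal_le hκ0 (hκn n))) a).trans ?_
    gcongr
    rw [← Finset.sum_div]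
    exact div_le_div_of_nonneg_right (hsum.sum_le_tsum _ fun n _ => (κ n).2) (by positivity)
  have hlt (a : ℝ) (ha : a < M ^ 2) :
      P {ω | M ^ 2 ≤ ∑' n, X n ω ^ 2} ≤ ENNReal.ofReal (exp (-t * a + C)) :=
    (measure_le_tsum_le_iSup_measure (fun n ω => sq_nonneg (X n ω)) ha).trans
      (iSup_le (hpartial a))
  have hcont : Continuous fun a => ENNReal.ofReal (exp (-t * a + C)) :=
    ENNReal.continuous_ofReal.comp (by fun_prop)
  exact ge_of_tendsto ((hcont.tendsto (M ^ 2)).mono_left nhdsWithin_le_nhds)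
    (eventually_nhdsWithin_of_forall (s := Iio (M ^ 2)) hlt)

/-- Simplified tail bound for the squared L² norm `Y = ∑ₙ Xₙ²` of a Gaussian process with
Karhunen–Loève variances `κₙ` (indexed by `n : ℕ`, `κ 0` playing the role of `κ₁`):
for `M² > Σ = ∑ₙ κₙ`,
`P(Y ≥ M²) ≤ exp(-((e-1)/(2e κ₁)) M² + Σ/(2κ₁))`. -/
theorem tail_bound_sum_sq_gaussians'
    {Ω : Type*} [MeasurableSpace Ω] (P : Measure Ω) [IsProbabilityMeasure P]
    (κ : ℕ → NNReal) (hmono : Antitone κ) (hκ1 : 0 < κ 0)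
    (hsum : Summable fun n => (κ n : ℝ))
    (X : ℕ → Ω → ℝ) (hXmeas : ∀ n, Measurable (X n))
    (hindep : iIndepFun X P)
    (hlaw : ∀ n, P.map (X n) = gaussianReal 0 (κ n))
    (M : ℝ) (hM : (∑' n, (κ n : ℝ)) < M ^ 2) :
    P {ω | M ^ 2 ≤ ∑' n, (X n ω) ^ 2}
      ≤ ENNReal.ofReal (Real.exp
          (-((Real.exp 1 - 1) / (2 * Real.exp 1 * (κ 0 : ℝ))) * M ^ 2
            + (∑' n, (κ n : ℝ)) / (2 * (κ 0 : ℝ)))) :=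
  tail_bound_sum_sq_gaussians'_general P κ hmono hκ1 hsum X hXmeas hindep hlaw M
end

section
/- Let μ be a Borel probability measure on ℝ^d with finite second moment, and let φ : ℝ^d → ℝ be convex and differentiable, with φ integrable with respect to μ and ∫ ‖∇φ(x)‖² dμ(x) < ∞. Let ν = (∇φ)_#μ be the pushforward of μ under the map ∇φ. Then for every coupling γ of μ and ν, ∫_{ℝ^d×ℝ^d} ‖x − y‖² dγ(x,y) ≥ ∫_{ℝ^d} ‖x − ∇φ(x)‖² dμ(x); that is, the coupling (Id × ∇φ)_#μ induced by the map ∇φ minimizes the quadratic transport cost among all couplings of μ and ν. -/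
/-!
By convexity, `∇φ z` is a supporting slope of `φ` at `z`, so `z` maximises `x ↦ ⟪x, ∇φ z⟫ - φ x`
and the Fenchel–Young inequality `⟪x, y⟫ ≤ φ x + φ* y` becomes an equality at `y = ∇φ x`.
Integrating it against a coupling `γ` and using the marginals gives
`∫ ⟪x, y⟫ dγ ≤ ∫ φ dμ + ∫ φ* ∘ ∇φ dμ = ∫ ⟪x, ∇φ x⟫ dμ`. Expanding `‖x - y‖²`, the squared-norm
terms depend only on the marginals, so the cost of `γ` is at least that of `(id × ∇φ)_# μ`.
-/

open MeasureTheory Set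
open scoped RealInnerProductSpace ENNReal

section SecondMoments

variable {α E : Type*} [MeasurableSpace α] {μ : Measure α}

theorem MeasureTheory.MemLp.lintegral_nnnorm_sq [NormedAddCommGroup E] {f : α → E}
    (hf : MemLp f 2 μ) :
    ∫⁻ a, (‖f a‖₊ : ℝ≥0∞) ^ 2 ∂μ = ENNReal.ofReal (∫ a, ‖f a‖ ^ 2 ∂μ) := by
  rw [ofReal_integral_eq_lintegral_ofReal ((memLp_two_iff_integrable_sq_norm hf.1).1 hf)
    (ae_of_all _ fun a => sq_nonneg _)]
  simp_rw [ENNReal.ofReal_pow (norm_nonneg _), ofReal_norm, enorm_eq_nnnorm]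

variable [NormedAddCommGroup E] [InnerProductSpace ℝ E] {f g : α → E}

theorem MeasureTheory.MemLp.integrable_inner (hf : MemLp f 2 μ) (hg : MemLp g 2 μ) :
    Integrable (fun a => ⟪f a, g a⟫) μ :=
  (L2.integrable_inner (𝕜 := ℝ) (hf.toLp f) (hg.toLp g)).congr <| by
    filter_upwards [hf.coeFn_toLp, hg.coeFn_toLp] with a hfa hga
    rw [hfa, hga]

theorem MeasureTheory.integral_norm_sub_sq (hf : MemLp f 2 μ) (hg : MemLp g 2 μ) :
    ∫ a, ‖f a - g a‖ ^ 2 ∂μ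
      = ∫ a, ‖f a‖ ^ 2 ∂μ - 2 * ∫ a, ⟪f a, g a⟫ ∂μ + ∫ a, ‖g a‖ ^ 2 ∂μ := by
  have hf2 := (memLp_two_iff_integrable_sq_norm hf.1).1 hf
  have hg2 := (memLp_two_iff_integrable_sq_norm hg.1).1 hg
  have hfg := (hf.integrable_inner hg).const_mul 2
  have hf2fg : Integrable (fun a => ‖f a‖ ^ 2 - 2 * ⟪f a, g a⟫) μ := hf2.sub hfg
  simp_rw [norm_sub_sq_real]
  rw [integral_add hf2fg hg2, integral_sub hf2 hfg, integral_const_mul]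

theorem MeasureTheory.integral_comp_of_map_eq {β : Type*} [MeasurableSpace β] {ν : Measure β}
    {f : α → β} (hf : AEMeasurable f μ) (h : μ.map f = ν) {F : β → ℝ}
    (hF : AEStronglyMeasurable F ν) :
    ∫ a, F (f a) ∂μ = ∫ b, F b ∂ν := by
  subst h
  exact (integral_map hf hF).symm

end SecondMoments

theorem ConvexOn.le_sub_of_hasFDerivAt {E : Type*} [NormedAddCommGroup E] [NormedSpace ℝ E]
    {s : Set E} {φ : E → ℝ} {φ' : E →L[ℝ] ℝ} {x z : E}
    (hφ : ConvexOn ℝ s φ) (hz : z ∈ s) (hx : x ∈ s) (hφ' : HasFDerivAt φ φ' z) :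
    φ' (x - z) ≤ φ x - φ z := by
  let L : ℝ →ᵃ[ℝ] E := AffineMap.lineMap z x
  have hderiv : HasDerivAt (φ ∘ L) (φ' (x - z)) 0 := by
    have hL : HasDerivAt L (x - z) 0 := AffineMap.hasDerivAt_lineMap
    exact (by simpa [L] using hφ' : HasFDerivAt φ φ' (L 0)).comp_hasDerivAt 0 hL
  simpa [slope_def_field, L] using
    (hφ.comp_affineMap L).le_slope_of_hasDerivAt (by simpa [L]) (by simpa [L]) zero_lt_one hderiv

variable {E : Type*} [NormedAddCommGroup E] [InnerProductSpace ℝ E]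

theorem ConvexOn.inner_sub_le_inner_gradient_sub [CompleteSpace E] {φ : E → ℝ}
    (hφ : ConvexOn ℝ univ φ) {z : E} (hz : DifferentiableAt ℝ φ z) (x : E) :
    ⟪x, gradient φ z⟫ - φ x ≤ ⟪z, gradient φ z⟫ - φ z := by
  have := hφ.le_sub_of_hasFDerivAt (mem_univ z) (mem_univ x) hz.hasGradientAt.hasFDerivAt
  rw [InnerProductSpace.toDual_apply_apply, inner_sub_right, real_inner_comm x,
    real_inner_comm z] at this
  linarith

/-- Where the supremum is infinite this takes the junk value `0`; only its values on the range of
a gradient matter below. -/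
noncomputable def fenchelConjugate (φ : E → ℝ) (y : E) : ℝ := ⨆ x, (⟪x, y⟫ - φ x)

theorem inner_sub_le_fenchelConjugate {φ : E → ℝ} {y : E}
    (hy : BddAbove (range fun x => ⟪x, y⟫ - φ x)) (x : E) :
    ⟪x, y⟫ - φ x ≤ fenchelConjugate φ y :=
  le_ciSup hy x

theorem fenchelConjugate_eq_of_forall_le {φ : E → ℝ} {y z : E}
    (hz : ∀ x, ⟪x, y⟫ - φ x ≤ ⟪z, y⟫ - φ z) :
    fenchelConjugate φ y = ⟪z, y⟫ - φ z :=
  le_antisymm (ciSup_le hz) (le_ciSup ⟨_, forall_mem_range.2 hz⟩ z)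

theorem ConvexOn.fenchelConjugate_gradient [CompleteSpace E] {φ : E → ℝ}
    (hφ : ConvexOn ℝ univ φ) {z : E} (hz : DifferentiableAt ℝ φ z) :
    fenchelConjugate φ (gradient φ z) = ⟪z, gradient φ z⟫ - φ z :=
  fenchelConjugate_eq_of_forall_le (hφ.inner_sub_le_inner_gradient_sub hz)

section Measurability

variable [TopologicalSpace.SeparableSpace E] [MeasurableSpace E] [OpensMeasurableSpace E]
  {φ : E → ℝ}

theorem measurable_fenchelConjugate (hφ : Continuous φ) : Measurable (fenchelConjugate φ) := by
  obtain ⟨S, hS, hSd⟩ := TopologicalSpace.exists_countable_dense E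
  have : Countable S := hS.to_subtype
  have hsup : fenchelConjugate φ = fun y => ⨆ x : S, (⟪(x : E), y⟫ - φ x) := by
    ext y
    exact (hSd.ciSup' (by fun_prop : Continuous fun x => ⟪x, y⟫ - φ x)).symm
  rw [hsup]
  exact Measurable.iSup fun x => by fun_prop

theorem measurableSet_bddAbove_inner_sub (hφ : Continuous φ) :
    MeasurableSet {y : E | BddAbove (range fun x => ⟪x, y⟫ - φ x)} := by
  obtain ⟨S, hS, hSd⟩ := TopologicalSpace.exists_countable_dense E
  have : Countable S := hS.to_subtype
  have hset : {y : E | BddAbove (range fun x => ⟪x, y⟫ - φ x)}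
      = {y | BddAbove (range fun x : S => ⟪(x : E), y⟫ - φ x)} := by
    ext y
    change BddAbove _ ↔ BddAbove _
    rw [BddAbove, BddAbove, ← hSd.upperBounds_image
      (by fun_prop : Continuous fun x => ⟪x, y⟫ - φ x), image_eq_range]
  rw [hset]
  exact measurableSet_bddAbove_range fun x => by fun_prop

end Measurability

section Coupling

variable [CompleteSpace E] [MeasurableSpace E] [BorelSpace E]
  {φ : E → ℝ} {μ : Measure E} {γ : Measure (E × E)}

theorem measurable_gradient (φ : E → ℝ) : Measurable (gradient φ) :=
  (InnerProductSpace.toDual ℝ E).symm.continuous.measurable.comp (measurable_fderiv ℝ φ)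

variable [TopologicalSpace.SeparableSpace E]

theorem ConvexOn.ae_inner_le_add_fenchelConjugate (hφ : ConvexOn ℝ univ φ)
    (hdiff : Differentiable ℝ φ) (hγ : γ.map Prod.snd = μ.map (gradient φ)) :
    ∀ᵐ p ∂γ, ⟪p.1, p.2⟫ ≤ φ p.1 + fenchelConjugate φ p.2 := by
  have hbdd : ∀ᵐ y ∂(μ.map (gradient φ)), BddAbove (range fun x => ⟪x, y⟫ - φ x) := by
    rw [ae_map_iff (measurable_gradient φ).aemeasurable
      (measurableSet_bddAbove_inner_sub hdiff.continuous)]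
    exact ae_of_all _ fun z =>
      ⟨_, forall_mem_range.2 (hφ.inner_sub_le_inner_gradient_sub (hdiff z))⟩
  rw [← hγ] at hbdd
  filter_upwards [ae_of_ae_map measurable_snd.aemeasurable hbdd] with p hp
  linarith [inner_sub_le_fenchelConjugate hp p.1]

theorem ConvexOn.integral_inner_le_of_map_snd_eq_map_gradient (hφ : ConvexOn ℝ univ φ)
    (hdiff : Differentiable ℝ φ) (hφμ : Integrable φ μ)
    (hγ₁ : γ.map Prod.fst = μ) (hγ₂ : γ.map Prod.snd = μ.map (gradient φ))
    (hμ : Integrable (fun x => ⟪x, gradient φ x⟫) μ)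
    (hγ : Integrable (fun p : E × E => ⟪p.1, p.2⟫) γ) :
    ∫ p, ⟪p.1, p.2⟫ ∂γ ≤ ∫ x, ⟪x, gradient φ x⟫ ∂μ := by
  set ψ := fenchelConjugate φ
  have hψmeas : Measurable ψ := measurable_fenchelConjugate hdiff.continuous
  have hψ : (fun x => ψ (gradient φ x)) = fun x => ⟪x, gradient φ x⟫ - φ x :=
    funext fun x => hφ.fenchelConjugate_gradient (hdiff x)
  have hψμ : Integrable ψ (μ.map (gradient φ)) :=
    (integrable_map_measure hψmeas.aestronglyMeasurable (measurable_gradient φ).aemeasurable).2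
      (by rw [Function.comp_def, hψ]; exact hμ.sub hφμ)
  have hφγ : Integrable (fun p : E × E => φ p.1) γ :=
    (hγ₁ ▸ hφμ : Integrable φ (γ.map Prod.fst)).comp_aemeasurable measurable_fst.aemeasurable
  have hψγ : Integrable (fun p : E × E => ψ p.2) γ :=
    (hγ₂ ▸ hψμ : Integrable ψ (γ.map Prod.snd)).comp_aemeasurable measurable_snd.aemeasurable
  calc ∫ p, ⟪p.1, p.2⟫ ∂γ ≤ ∫ p, (φ p.1 + ψ p.2) ∂γ :=
        integral_mono_ae hγ (hφγ.add hψγ) (hφ.ae_inner_le_add_fenchelConjugate hdiff hγ₂)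
    _ = ∫ x, φ x ∂μ + ∫ x, ψ (gradient φ x) ∂μ := by
      rw [integral_add hφγ hψγ,
        integral_comp_of_map_eq measurable_fst.aemeasurable hγ₁
          hdiff.continuous.aestronglyMeasurable,
        integral_comp_of_map_eq measurable_snd.aemeasurable hγ₂ hψmeas.aestronglyMeasurable,
        integral_map (measurable_gradient φ).aemeasurable hψmeas.aestronglyMeasurable]
    _ = ∫ x, ⟪x, gradient φ x⟫ ∂μ := by
      rw [hψ, integral_sub hμ hφμ]
      ring

end Coupling

theorem gradient_convex_optimal_transport_general {d : ℕ}
    (μ : Measure (EuclideanSpace ℝ (Fin d)))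
    (hmom : Integrable (fun x => ‖x‖ ^ 2) μ)
    (φ : EuclideanSpace ℝ (Fin d) → ℝ)
    (hconv : ConvexOn ℝ Set.univ φ) (hdiff : Differentiable ℝ φ)
    (hφint : Integrable φ μ)
    (hgradint : Integrable (fun x => ‖gradient φ x‖ ^ 2) μ)
    (γ : Measure (EuclideanSpace ℝ (Fin d) × EuclideanSpace ℝ (Fin d)))
    (hγ1 : γ.map Prod.fst = μ)
    (hγ2 : γ.map Prod.snd = μ.map (gradient φ)) :
    ∫⁻ x, (‖x - gradient φ x‖₊ : ENNReal) ^ 2 ∂μ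
      ≤ ∫⁻ p, (‖p.1 - p.2‖₊ : ENNReal) ^ 2 ∂γ := by
  have hgrad := measurable_gradient φ
  have hid : MemLp (fun x => x) 2 μ :=
    (memLp_two_iff_integrable_sq_norm aestronglyMeasurable_id).2 hmom
  have hφ' : MemLp (gradient φ) 2 μ :=
    (memLp_two_iff_integrable_sq_norm hgrad.aestronglyMeasurable).2 hgradint
  have hfst : MemLp (fun p => p.1) 2 γ :=
    (hγ1 ▸ hid : MemLp (fun x => x) 2 (γ.map Prod.fst)).comp_of_map measurable_fst.aemeasurable
  have hsnd : MemLp (fun p => p.2) 2 γ :=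
    (hγ2 ▸ (memLp_map_measure_iff aestronglyMeasurable_id hgrad.aemeasurable).2 hφ' :
      MemLp (fun x => x) 2 (γ.map Prod.snd)).comp_of_map measurable_snd.aemeasurable
  have hinner := hconv.integral_inner_le_of_map_snd_eq_map_gradient hdiff hφint hγ1 hγ2
    (hid.integrable_inner hφ') (hfst.integrable_inner hsnd)
  have hfst_sq : ∫ p, ‖p.1‖ ^ 2 ∂γ = ∫ x, ‖x‖ ^ 2 ∂μ :=
    integral_comp_of_map_eq measurable_fst.aemeasurable hγ1 (F := fun x => ‖x‖ ^ 2) (by fun_prop)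
  have hsnd_sq : ∫ p, ‖p.2‖ ^ 2 ∂γ = ∫ x, ‖gradient φ x‖ ^ 2 ∂μ := by
    rw [integral_comp_of_map_eq measurable_snd.aemeasurable hγ2 (F := fun y => ‖y‖ ^ 2)
      (by fun_prop), integral_map hgrad.aemeasurable (by fun_prop)]
  have hcostμ : MemLp (fun x => x - gradient φ x) 2 μ := hid.sub hφ'
  have hcostγ : MemLp (fun p => p.1 - p.2) 2 γ := hfst.sub hsnd
  rw [hcostμ.lintegral_nnnorm_sq, hcostγ.lintegral_nnnorm_sq]
  refine ENNReal.ofReal_le_ofReal ?_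
  linarith [integral_norm_sub_sq hid hφ', integral_norm_sub_sq hfst hsnd]

/-- The gradient of a convex differentiable function is an optimal transport map onto its
pushforward: every coupling `γ` of `μ` and `ν = (∇φ)_#μ` has quadratic cost at least that of
the coupling induced by `∇φ`. -/
theorem gradient_convex_optimal_transport {d : ℕ}
    (μ : Measure (EuclideanSpace ℝ (Fin d))) [IsProbabilityMeasure μ]
    (hmom : Integrable (fun x => ‖x‖ ^ 2) μ)
    (φ : EuclideanSpace ℝ (Fin d) → ℝ)
    (hconv : ConvexOn ℝ Set.univ φ) (hdiff : Differentiable ℝ φ)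
    (hφint : Integrable φ μ)
    (hgradint : Integrable (fun x => ‖gradient φ x‖ ^ 2) μ)
    (γ : Measure (EuclideanSpace ℝ (Fin d) × EuclideanSpace ℝ (Fin d)))
    (hγ1 : γ.map Prod.fst = μ)
    (hγ2 : γ.map Prod.snd = μ.map (gradient φ)) :
    ∫⁻ x, (‖x - gradient φ x‖₊ : ENNReal) ^ 2 ∂μ
      ≤ ∫⁻ p, (‖p.1 - p.2‖₊ : ENNReal) ^ 2 ∂γ :=
  gradient_convex_optimal_transport_general μ hmom φ hconv hdiff hφint hgradint γ hγ1 hγ2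
end

section
/- For all vectors u, v ∈ ℝ^k the identity 2‖u u^⊤ − v v^⊤‖_F² − ‖u − v‖⁴ = (‖u‖² − ‖v‖²)² + 4⟨u, v⟩·‖u − v‖² holds. In particular, if ⟨u, v⟩ ≥ 0 then ‖u − v‖⁴ ≤ 2‖u u^⊤ − v v^⊤‖_F², i.e. ‖(u−v)(u−v)^⊤‖_F² ≤ 2‖u u^⊤ − v v^⊤‖_F². -/
open Finset

/-!
Expanding the double sum gives `‖u uᵀ - v vᵀ‖_F² = ‖u‖⁴ + ‖v‖⁴ - 2⟪u, v⟫²`, and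
`‖u - v‖² = ‖u‖² - 2⟪u, v⟫ + ‖v‖²`; in these three quantities the identity is a polynomial
identity. Its right-hand side is nonnegative when `⟪u, v⟫ ≥ 0`, which gives the inequality.
-/

section Outer

variable {ι : Type*} [Fintype ι]

theorem sum_sum_mul_sub_mul_sq (a b : ι → ℝ) :
    ∑ i, ∑ j, (a i * a j - b i * b j) ^ 2
      = (∑ i, a i ^ 2) ^ 2 + (∑ i, b i ^ 2) ^ 2 - 2 * (∑ i, a i * b i) ^ 2 := by
  simp only [sq (∑ i, _), sum_mul_sum]
  simp only [mul_sum, ← sum_add_distrib, ← sum_sub_distrib]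
  exact sum_congr rfl fun i _ => sum_congr rfl fun j _ => by ring

theorem sum_sum_mul_sq (a : ι → ℝ) : ∑ i, ∑ j, (a i * a j) ^ 2 = (∑ i, a i ^ 2) ^ 2 := by
  simpa using sum_sum_mul_sub_mul_sq a 0

namespace EuclideanSpace

theorem real_inner_eq_sum (u v : EuclideanSpace ℝ ι) : inner ℝ u v = ∑ i, u i * v i := by
  simp [PiLp.inner_apply, mul_comm]

theorem sum_sum_mul_sub_mul_sq (u v : EuclideanSpace ℝ ι) :
    ∑ i, ∑ j, (u i * u j - v i * v j) ^ 2 = ‖u‖ ^ 4 + ‖v‖ ^ 4 - 2 * inner ℝ u v ^ 2 := by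
  rw [_root_.sum_sum_mul_sub_mul_sq, real_inner_eq_sum, ← real_norm_sq_eq, ← real_norm_sq_eq]
  ring

theorem sum_sum_mul_sq (w : EuclideanSpace ℝ ι) : ∑ i, ∑ j, (w i * w j) ^ 2 = ‖w‖ ^ 4 := by
  rw [_root_.sum_sum_mul_sq, ← real_norm_sq_eq]
  ring

end EuclideanSpace

end Outer

theorem two_mul_sub_norm_sub_pow_four {F : Type*} [NormedAddCommGroup F] [InnerProductSpace ℝ F]
    (u v : F) :
    2 * (‖u‖ ^ 4 + ‖v‖ ^ 4 - 2 * inner ℝ u v ^ 2) - ‖u - v‖ ^ 4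
      = (‖u‖ ^ 2 - ‖v‖ ^ 2) ^ 2 + 4 * inner ℝ u v * ‖u - v‖ ^ 2 := by
  rw [show ‖u - v‖ ^ 4 = (‖u - v‖ ^ 2) ^ 2 by ring, norm_sub_sq_real]
  ring

/-- Outer-product identity: for `u, v ∈ ℝ^k`,
`2‖u uᵀ − v vᵀ‖_F² − ‖u − v‖⁴ = (‖u‖² − ‖v‖²)² + 4⟨u,v⟩‖u − v‖²`, and in particular if
`⟨u,v⟩ ≥ 0` then `‖(u−v)(u−v)ᵀ‖_F² = ‖u − v‖⁴ ≤ 2‖u uᵀ − v vᵀ‖_F²`. Here the squared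
Frobenius norm of a `k × k` matrix is written as the double sum of squared entries. -/
theorem outer_product_frobenius_identity {k : ℕ} (u v : EuclideanSpace ℝ (Fin k)) :
    (2 * (∑ i : Fin k, ∑ j : Fin k, (u i * u j - v i * v j) ^ 2) - ‖u - v‖ ^ 4
        = (‖u‖ ^ 2 - ‖v‖ ^ 2) ^ 2 + 4 * (inner ℝ u v : ℝ) * ‖u - v‖ ^ 2)
    ∧ (0 ≤ (inner ℝ u v : ℝ) →
        (∑ i : Fin k, ∑ j : Fin k, ((u - v) i * (u - v) j) ^ 2) = ‖u - v‖ ^ 4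
        ∧ ‖u - v‖ ^ 4 ≤ 2 * ∑ i : Fin k, ∑ j : Fin k, (u i * u j - v i * v j) ^ 2) := by
  have identity := EuclideanSpace.sum_sum_mul_sub_mul_sq u v ▸ two_mul_sub_norm_sub_pow_four u v
  refine ⟨identity, fun hinner => ⟨EuclideanSpace.sum_sum_mul_sq (u - v), ?_⟩⟩
  have rhs_nonneg : 0 ≤ (‖u‖ ^ 2 - ‖v‖ ^ 2) ^ 2 + 4 * inner ℝ u v * ‖u - v‖ ^ 2 := by positivity
  linarith
end
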